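/- arXiv:2211.03774 — 2 statements merged into one kernel-verified Lean document; each statement's English description precedes it below -/
import Mathlib

section
/- Let B₃ be the braid group on three strands, presented with generators s, t and relation s·t·s = t·s·t, let 𝒯(a₁,…,aₙ) = s^{a₁}·t^{−a₂}·s^{a₃}·⋯ ∈ B₃, and let E = 𝒯(1,−1,1) = s·t·s. Then for all integers a₂, b, and m, the identity 𝒯(−2)·𝒯(0,a₂,b)·E^{2m+1}·𝒯(2) = 𝒯(−2,a₂,b,−2)·E^{2m+1} holds in B₃. -/
/-!
The half-twist `E = Δ = s·t·s` conjugates `s` to `t` and `t` back to `s`. Hence `Δ²` is central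
and every odd power of `Δ` still swaps the two generators, so `E^{2m+1}·s² = t²·E^{2m+1}`:
the trailing `𝒯(2)` passes through `E^{2m+1}` and becomes the final entry `−2` of `𝒯(−2,a₂,b,−2)`.
-/

/-- The single braid relation `s·t·s = t·s·t` for the braid group on three strands,
written as a relator in the free group on two generators. -/
def braidRels : Set (FreeGroup (Fin 2)) :=
  { FreeGroup.of 0 * FreeGroup.of 1 * FreeGroup.of 0 *
    (FreeGroup.of 1 * FreeGroup.of 0 * FreeGroup.of 1)⁻¹ }

/-- The braid group on three strands, presented with generators `s`, `t`
and the single relation `s·t·s = t·s·t`. -/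
abbrev B3 : Type := PresentedGroup braidRels

/-- The first generator `s` of `B₃`. -/
def s : B3 := PresentedGroup.of 0

/-- The second generator `t` of `B₃`. -/
def t : B3 := PresentedGroup.of 1

/-- The half-twist `Δ = s·t·s` (the 3-braid `E = 𝒯(1,−1,1)`). -/
def Δ : B3 := s * t * s

/-- Auxiliary function building `𝒯(a₁,…,aₙ)`: when the flag is `true` the next
entry is a power of `s` (horizontal twists on the top two strands), when `false`
it is an inverse power of `t`. -/
def Tgo : Bool → List ℤ → B3
  | _, [] => 1
  | true, a :: l => s ^ a * Tgo false l
  | false, a :: l => t ^ (-a) * Tgo true l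

/-- The 3-braid `𝒯(a₁,…,aₙ) = s^{a₁} · t^{−a₂} · s^{a₃} · t^{−a₄} · ⋯` in `B₃`. -/
def T (l : List ℤ) : B3 := Tgo true l

/-- The special 3-braid `E = 𝒯(1,−1,1) = s·t·s`. -/
def E : B3 := T [1, -1, 1]

theorem s_mul_t_mul_s : s * t * s = t * s * t :=
  PresentedGroup.mk_eq_mk_of_mul_inv_mem rfl

theorem semiconjBy_Δ_s_t : SemiconjBy Δ s t := by
  simp only [SemiconjBy, Δ]
  nth_rw 1 [s_mul_t_mul_s]
  group

theorem semiconjBy_Δ_t_s : SemiconjBy Δ t s := by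
  simp only [SemiconjBy, Δ]
  rw [mul_assoc (s * t), s_mul_t_mul_s]
  group

theorem SemiconjBy.zpow_two_mul_add_one_left {G : Type*} [Group G] {d x y : G}
    (hxy : SemiconjBy d x y) (hyx : SemiconjBy d y x) (m : ℤ) :
    SemiconjBy (d ^ (2 * m + 1)) x y := by
  have hsq : Commute (d * d) y := hxy.mul_left hyx
  rw [zpow_add_one, zpow_mul, zpow_two]
  exact SemiconjBy.mul_left (hsq.zpow_left m) hxy

theorem E_eq_Δ : E = Δ := by
  simp [E, T, Tgo, Δ, mul_assoc]

/-- Case 2, Subcase 2A of the proof of Theorem 3.8: for all integers `a₂`, `b`, `m`,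
`𝒯(−2)·𝒯(0,a₂,b)·E^{2m+1}·𝒯(2) = 𝒯(−2,a₂,b,−2)·E^{2m+1}` in `B₃`. -/
theorem gamma2_case2_subcase2A (a₂ b m : ℤ) :
    T [-2] * T [0, a₂, b] * E ^ (2 * m + 1) * T [2] =
      T [-2, a₂, b, -2] * E ^ (2 * m + 1) := by
  have swap : E ^ (2 * m + 1) * s ^ (2 : ℤ) = t ^ (2 : ℤ) * E ^ (2 * m + 1) := by
    rw [E_eq_Δ]
    exact (semiconjBy_Δ_s_t.zpow_two_mul_add_one_left semiconjBy_Δ_t_s m).zpow_right 2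
  calc T [-2] * T [0, a₂, b] * E ^ (2 * m + 1) * T [2]
      = s ^ (-2 : ℤ) * t ^ (-a₂) * s ^ b * (E ^ (2 * m + 1) * s ^ (2 : ℤ)) := by
        simp [T, Tgo, mul_assoc]
    _ = s ^ (-2 : ℤ) * t ^ (-a₂) * s ^ b * (t ^ (2 : ℤ) * E ^ (2 * m + 1)) := by rw [swap]
    _ = T [-2, a₂, b, -2] * E ^ (2 * m + 1) := by simp [T, Tgo, mul_assoc]
end

section
/- Let B₃ be the braid group on three strands, presented with generators s, t and relation s·t·s = t·s·t, let 𝒯(a₁,…,aₙ) = s^{a₁}·t^{−a₂}·s^{a₃}·⋯ ∈ B₃, and let E = 𝒯(1,−1,1) = s·t·s. Let m ∈ ℤ and ε ∈ {1,−1}. Then the following seven identities hold in B₃ for all integers a, b, c: (1) 𝒯(−2)·(𝒯(b)·E^{2m+1})·𝒯(2) = 𝒯(b−2,−2)·E^{2m+1}; (2) 𝒯(−2)·(𝒯(ε,a)·E^{2m})·𝒯(2) = 𝒯(ε−2,a,2)·E^{2m}; (3) 𝒯(−2)·(𝒯(ε)·E^{2m})·𝒯(2) = 𝒯(ε)·E^{2m};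 (4) 𝒯(−2)·(𝒯(0,a)·E^{2m+1})·𝒯(2) = 𝒯(−2,a−2)·E^{2m+1}; (5) 𝒯(−2)·(𝒯(0,a,b)·E^{2m+1})·𝒯(2) = 𝒯(−2,a,b,−2)·E^{2m+1}; (6) 𝒯(−2)·(𝒯(0,a,ε,c)·E^{2m})·𝒯(2) = 𝒯(−2,a,ε,c,2)·E^{2m}; (7) 𝒯(−2)·(𝒯(0,a,ε)·E^{2m})·𝒯(2) = 𝒯(−2,a,ε+2)·E^{2m}. -/
/-! By the braid relation, conjugation by `E = s·t·s` swaps `s` and `t`; hence `E²` is central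
and `E^k · s² = s² · E^k` or `t² · E^k` according to the parity of `k`. Pushing `𝒯(2) = s²`
through the power of `E` turns each identity into a word identity in the syllables of `𝒯`. -/

section SwapConjugation

variable {G : Type*} [Group G] {e x y : G}

theorem commute_sq_of_semiconjBy_swap (hxy : SemiconjBy e x y) (hyx : SemiconjBy e y x) :
    Commute (e ^ 2) x := by
  rw [sq]
  exact hyx.mul_left hxy

theorem semiconjBy_zpow_two_mul_of_swap (hxy : SemiconjBy e x y) (hyx : SemiconjBy e y x)
    (m k : ℤ) : SemiconjBy (e ^ (2 * m)) (x ^ k) (x ^ k) := by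
  rw [zpow_mul, zpow_ofNat]
  exact (commute_sq_of_semiconjBy_swap hxy hyx).zpow_zpow m k

theorem semiconjBy_zpow_two_mul_add_one_of_swap (hxy : SemiconjBy e x y)
    (hyx : SemiconjBy e y x) (m k : ℤ) : SemiconjBy (e ^ (2 * m + 1)) (x ^ k) (y ^ k) := by
  rw [zpow_add_one]
  exact (semiconjBy_zpow_two_mul_of_swap hyx hxy m k).mul_left (hxy.zpow_right k)

end SwapConjugation

theorem E_eq : E = s * t * s := by
  simp only [E, T, Tgo]
  group

theorem semiconjBy_E_s_t : SemiconjBy E s t :=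
  calc E * s = t * s * t * s := by rw [E_eq, s_mul_t_mul_s]
    _ = t * E := by rw [E_eq]; group

theorem semiconjBy_E_t_s : SemiconjBy E t s :=
  calc E * t = s * (t * s * t) := by rw [E_eq]; group
    _ = s * E := by rw [E_eq, s_mul_t_mul_s]

theorem gamma2_mul_E_zpow_even (X : B3) (m : ℤ) :
    T [-2] * (X * E ^ (2 * m)) * T [2] = s ^ (-2 : ℤ) * X * s ^ (2 : ℤ) * E ^ (2 * m) := by
  simp only [T, Tgo, mul_one, mul_assoc,
    (semiconjBy_zpow_two_mul_of_swap semiconjBy_E_s_t semiconjBy_E_t_s m 2).eq]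

theorem gamma2_mul_E_zpow_odd (X : B3) (m : ℤ) :
    T [-2] * (X * E ^ (2 * m + 1)) * T [2] =
      s ^ (-2 : ℤ) * X * t ^ (2 : ℤ) * E ^ (2 * m + 1) := by
  simp only [T, Tgo, mul_one, mul_assoc,
    (semiconjBy_zpow_two_mul_add_one_of_swap semiconjBy_E_s_t semiconjBy_E_t_s m 2).eq]

theorem gamma2_all_cases_general (m ε : ℤ) :
    (∀ b : ℤ, T [-2] * (T [b] * E ^ (2 * m + 1)) * T [2]
        = T [b - 2, -2] * E ^ (2 * m + 1)) ∧
    (∀ a : ℤ, T [-2] * (T [ε, a] * E ^ (2 * m)) * T [2]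
        = T [ε - 2, a, 2] * E ^ (2 * m)) ∧
    (T [-2] * (T [ε] * E ^ (2 * m)) * T [2] = T [ε] * E ^ (2 * m)) ∧
    (∀ a : ℤ, T [-2] * (T [0, a] * E ^ (2 * m + 1)) * T [2]
        = T [-2, a - 2] * E ^ (2 * m + 1)) ∧
    (∀ a b : ℤ, T [-2] * (T [0, a, b] * E ^ (2 * m + 1)) * T [2]
        = T [-2, a, b, -2] * E ^ (2 * m + 1)) ∧
    (∀ a c : ℤ, T [-2] * (T [0, a, ε, c] * E ^ (2 * m)) * T [2]
        = T [-2, a, ε, c, 2] * E ^ (2 * m)) ∧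
    (∀ a : ℤ, T [-2] * (T [0, a, ε] * E ^ (2 * m)) * T [2]
        = T [-2, a, ε + 2] * E ^ (2 * m)) := by
  refine ⟨fun b ↦ ?_, fun a ↦ ?_, ?_, fun a ↦ ?_, fun a b ↦ ?_, fun a c ↦ ?_, fun a ↦ ?_⟩
  all_goals
    first
    | rw [gamma2_mul_E_zpow_odd]
    | rw [gamma2_mul_E_zpow_even]
    simp only [T, Tgo]
    group

/-- The seven braid-level identities constituting the complete computation in the proof of
Theorem 3.8: for every integer `m` and every `ε ∈ {1,−1}`, the Γ₂-move
`B ↦ 𝒯(−2)·B·𝒯(2)` acts as listed on each standard-form 3-braid whose four-plat closure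
is the unknot. -/
theorem gamma2_all_cases (m ε : ℤ) (hε : ε = 1 ∨ ε = -1) :
    (∀ b : ℤ, T [-2] * (T [b] * E ^ (2 * m + 1)) * T [2]
        = T [b - 2, -2] * E ^ (2 * m + 1)) ∧
    (∀ a : ℤ, T [-2] * (T [ε, a] * E ^ (2 * m)) * T [2]
        = T [ε - 2, a, 2] * E ^ (2 * m)) ∧
    (T [-2] * (T [ε] * E ^ (2 * m)) * T [2] = T [ε] * E ^ (2 * m)) ∧
    (∀ a : ℤ, T [-2] * (T [0, a] * E ^ (2 * m + 1)) * T [2]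
        = T [-2, a - 2] * E ^ (2 * m + 1)) ∧
    (∀ a b : ℤ, T [-2] * (T [0, a, b] * E ^ (2 * m + 1)) * T [2]
        = T [-2, a, b, -2] * E ^ (2 * m + 1)) ∧
    (∀ a c : ℤ, T [-2] * (T [0, a, ε, c] * E ^ (2 * m)) * T [2]
        = T [-2, a, ε, c, 2] * E ^ (2 * m)) ∧
    (∀ a : ℤ, T [-2] * (T [0, a, ε] * E ^ (2 * m)) * T [2]
        = T [-2, a, ε + 2] * E ^ (2 * m)) :=
  gamma2_all_cases_general m ε
end
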